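/- Let X be a Banach lattice and Y a Banach sequence lattice with Köthe dual Y^×. Then for every n ∈ ℕ, x₁,...,x_n ∈ X and φ₁,...,φ_n ∈ X*, Σ_{j=1}^n |φ_j(x_j)| ≤ ⟨ ‖(x₁,...,x_n)‖_Y , ‖(φ₁,...,φ_n)‖_{Y^×} ⟩, where ‖(x₁,...,x_n)‖_Y ∈ X and ‖(φ₁,...,φ_n)‖_{Y^×} ∈ X* are defined via Krivine's functional calculus in X and in the dual Banach lattice X* respectively, and ⟨·,·⟩ is the duality pairing. -/

import Mathlib

open Filter Topology

/-- A Banach sequence lattice: a Banach function space over `ℕ` with counting measure,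
an ideal of sequences with an order-preserving (monotone) complete norm, containing all
canonical unit vectors. -/
structure BanachSeqLattice where
  Mem : (ℕ → ℝ) → Prop
  nrm : (ℕ → ℝ) → ℝ
  zero_mem : Mem 0
  add_mem : ∀ {f g : ℕ → ℝ}, Mem f → Mem g → Mem (f + g)
  smul_mem : ∀ (c : ℝ) {f : ℕ → ℝ}, Mem f → Mem (c • f)
  ideal : ∀ {f g : ℕ → ℝ}, (∀ n, |f n| ≤ |g n|) → Mem g → Mem f
  nrm_mono : ∀ {f g : ℕ → ℝ}, Mem g → (∀ n, |f n| ≤ |g n|) → nrm f ≤ nrm g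
  nrm_nonneg : ∀ f : ℕ → ℝ, 0 ≤ nrm f
  nrm_eq_zero_iff : ∀ {f : ℕ → ℝ}, Mem f → (nrm f = 0 ↔ f = 0)
  nrm_add_le : ∀ {f g : ℕ → ℝ}, Mem f → Mem g → nrm (f + g) ≤ nrm f + nrm g
  nrm_smul : ∀ (c : ℝ) (f : ℕ → ℝ), nrm (c • f) = |c| * nrm f
  unit_mem : ∀ n : ℕ, Mem (fun k => if k = n then 1 else 0)
  complete : ∀ u : ℕ → (ℕ → ℝ), (∀ m, Mem (u m)) →
    (∀ ε : ℝ, 0 < ε → ∃ N, ∀ m, N ≤ m → ∀ k, N ≤ k → nrm (u m - u k) < ε) →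
    ∃ f, Mem f ∧ Filter.Tendsto (fun m => nrm (u m - f)) Filter.atTop (nhds 0)

/-- Membership in the Köthe dual `Y^×` of a Banach sequence lattice. -/
def Kmem (Y : BanachSeqLattice) (β : ℕ → ℝ) : Prop :=
  ∀ α : ℕ → ℝ, Y.Mem α → Summable (fun n => |α n * β n|)

/-- The Köthe dual norm `‖β‖_{Y^×} = sup { Σ |α_n β_n| : ‖α‖_Y ≤ 1 }`. -/
noncomputable def Knrm (Y : BanachSeqLattice) (β : ℕ → ℝ) : ℝ :=
  sSup {s : ℝ | ∃ α : ℕ → ℝ, Y.Mem α ∧ Y.nrm α ≤ 1 ∧ s = ∑' n, |α n * β n|}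

/-- Continuous positively 1-homogeneous functions on `ℝⁿ` (the space `𝓗_n`). -/
def Hom1 (n : ℕ) (h : (Fin n → ℝ) → ℝ) : Prop :=
  Continuous h ∧ ∀ c : ℝ, 0 ≤ c → ∀ t, h (c • t) = c * h t

/-- Extension of a finite vector to a sequence, by zero. -/
def finSeq (n : ℕ) (t : Fin n → ℝ) : ℕ → ℝ :=
  fun k => if hk : k < n then t ⟨k, hk⟩ else 0

/-- The element `‖(x₁,...,x_n)‖_Y ∈ X` given by Krivine's functional calculus `τ`. -/
noncomputable def vY (Y : BanachSeqLattice) {X : Type*} [NormedAddCommGroup X] [Lattice X] [HasSolidNorm X] [IsOrderedAddMonoid X]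
    (τ : ∀ n : ℕ, (Fin n → X) → ((Fin n → ℝ) → ℝ) → X)
    (n : ℕ) (x : Fin n → X) : X :=
  τ n x (fun t => Y.nrm (finSeq n t))

/-- The norm of the space `ℓ^{τ,Y}(X)`: `sup_n ‖ ‖(x₁,...,x_n)‖_Y ‖_X`. -/
noncomputable def Tnrm (Y : BanachSeqLattice) {X : Type*} [NormedAddCommGroup X] [Lattice X] [HasSolidNorm X] [IsOrderedAddMonoid X]
    (τ : ∀ n : ℕ, (Fin n → X) → ((Fin n → ℝ) → ℝ) → X) (x : ℕ → X) : ℝ :=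
  ⨆ n : ℕ, ‖vY Y τ n (fun j : Fin n => x (j : ℕ))‖

/-- Membership in `ℓ^{τ,Y}(X)`. -/
def Tmem (Y : BanachSeqLattice) {X : Type*} [NormedAddCommGroup X] [Lattice X] [HasSolidNorm X] [IsOrderedAddMonoid X]
    (τ : ∀ n : ℕ, (Fin n → X) → ((Fin n → ℝ) → ℝ) → X) (x : ℕ → X) : Prop :=
  BddAbove (Set.range fun n : ℕ => ‖vY Y τ n (fun j : Fin n => x (j : ℕ))‖)

/-- Membership in `ℓ₀^{τ,Y}(X)`, the closure of the eventually zero sequences. -/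
def T0mem (Y : BanachSeqLattice) {X : Type*} [NormedAddCommGroup X] [Lattice X] [HasSolidNorm X] [IsOrderedAddMonoid X]
    (τ : ∀ n : ℕ, (Fin n → X) → ((Fin n → ℝ) → ℝ) → X) (x : ℕ → X) : Prop :=
  Tmem Y τ x ∧ ∀ ε : ℝ, 0 < ε → ∃ v : ℕ → X,
    (∃ N, ∀ j, N ≤ j → v j = 0) ∧ Tnrm Y τ (x - v) < ε

/-!
Put `f = τ_X(‖·‖_Y)` and `g = τ_{X*}(‖·‖_{Y^×})`. Since `∑ a_j s_j ≤ ‖s‖_{Y^×}` whenever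
`‖a‖_Y ≤ 1`, positivity of the calculus gives `∑ a_j φ_j ≤ g` for every `a` on the unit sphere
`S` of `‖·‖_Y`. Cover the compact set `S` by finitely many `δ`-balls around points `θ_i ∈ S` and
extend a subordinate partition of unity homogeneously: `‖t‖_Y = ∑ q_i(t)`. Then
`f = ∑ τ_X(q_i)` with `τ_X(q_i) ≥ 0`, and `x_j` lies within `δ‖f‖` of `∑ θ_{ij} τ_X(q_i)`, so
`∑ φ_j(x_j) ≲ ∑_i ⟨∑_j θ_{ij} φ_j, τ_X(q_i)⟩ ≤ ∑_i ⟨g, τ_X(q_i)⟩ = ⟨g, f⟩` up to `O(δ)`.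
Replacing `φ_j` by `sign(φ_j(x_j)) φ_j` yields the absolute values.
-/

namespace Hom1

variable {n : ℕ} {h h₁ h₂ : (Fin n → ℝ) → ℝ}

lemma zero : Hom1 n 0 :=
  ⟨continuous_const, fun _ _ _ => by simp⟩

lemma proj (j : Fin n) : Hom1 n (fun t => t j) :=
  ⟨continuous_apply j, fun _ _ _ => rfl⟩

lemma add (H₁ : Hom1 n h₁) (H₂ : Hom1 n h₂) : Hom1 n (h₁ + h₂) :=
  ⟨H₁.1.add H₂.1, fun c hc t => by simp only [Pi.add_apply, H₁.2 c hc t, H₂.2 c hc t]; ring⟩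

lemma smul (H : Hom1 n h) (a : ℝ) : Hom1 n (a • h) :=
  ⟨H.1.const_smul a, fun c hc t => by simp only [Pi.smul_apply, smul_eq_mul, H.2 c hc t]; ring⟩

lemma sub (H₁ : Hom1 n h₁) (H₂ : Hom1 n h₂) : Hom1 n (h₁ - h₂) := by
  simpa [sub_eq_add_neg] using H₁.add (H₂.smul (-1))

lemma sum {ι : Type*} (s : Finset ι) {k : ι → (Fin n → ℝ) → ℝ} (hk : ∀ i ∈ s, Hom1 n (k i)) :
    Hom1 n (∑ i ∈ s, k i) := by
  classical
  induction s using Finset.induction_on with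
  | empty => simpa using zero
  | insert a s ha ih =>
    rw [Finset.sum_insert ha]
    exact (hk a (s.mem_insert_self a)).add (ih fun i hi => hk i (Finset.mem_insert_of_mem hi))

lemma map_zero (H : Hom1 n h) : h 0 = 0 := by
  simpa using H.2 0 le_rfl 0

lemma nonneg (H : Hom1 n h) (hpos : ∀ t, t ≠ 0 → 0 < h t) (t : Fin n → ℝ) : 0 ≤ h t := by
  rcases eq_or_ne t 0 with rfl | ht
  · exact H.map_zero.ge
  · exact (hpos t ht).le

lemma of_add_le (hadd : ∀ s t, h (s + t) ≤ h s + h t)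
    (hsmul : ∀ c : ℝ, 0 ≤ c → ∀ t, h (c • t) = c * h t) : Hom1 n h := by
  have hconv : ConvexOn ℝ Set.univ h := ⟨convex_univ, fun s _ t _ a b ha hb _ => by
    simpa only [hsmul a ha, hsmul b hb, smul_eq_mul] using hadd (a • s) (b • t)⟩
  exact ⟨continuousOn_univ.1 (by simpa using hconv.continuousOn_interior), hsmul⟩

-- `m` is the (positive) minimum of `h` on the compact unit sphere.
lemma exists_mul_norm_le (H : Hom1 n h) (hpos : ∀ t, t ≠ 0 → 0 < h t) :
    ∃ m > 0, ∀ t, m * ‖t‖ ≤ h t := by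
  by_cases hS : (Metric.sphere (0 : Fin n → ℝ) 1).Nonempty
  · obtain ⟨t₀, ht₀, hmin⟩ := (isCompact_sphere (0 : Fin n → ℝ) 1).exists_isMinOn hS
      H.1.continuousOn
    have ht₀0 : t₀ ≠ 0 := ne_zero_of_mem_unit_sphere ⟨t₀, ht₀⟩
    refine ⟨h t₀, hpos t₀ ht₀0, fun t => ?_⟩
    rcases eq_or_ne t 0 with rfl | ht
    · simp [H.map_zero]
    have hnorm : 0 < ‖t‖ := norm_pos_iff.2 ht
    have hu : ‖t‖⁻¹ • t ∈ Metric.sphere (0 : Fin n → ℝ) 1 := by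
      simp [norm_smul, hnorm.ne']
    calc h t₀ * ‖t‖ ≤ h (‖t‖⁻¹ • t) * ‖t‖ := mul_le_mul_of_nonneg_right (hmin hu) hnorm.le
      _ = h t := by rw [H.2 _ (inv_nonneg.2 hnorm.le), mul_comm, ← mul_assoc,
          mul_inv_cancel₀ hnorm.ne', one_mul]
  · refine ⟨1, one_pos, fun t => ?_⟩
    rcases eq_or_ne t 0 with rfl | ht
    · simp [H.map_zero]
    exact absurd ⟨‖t‖⁻¹ • t, by simp [norm_smul, ht]⟩ hS

lemma isCompact_level_one (H : Hom1 n h) (hpos : ∀ t, t ≠ 0 → 0 < h t) :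
    IsCompact {t | h t = 1} := by
  obtain ⟨m, hm, hmh⟩ := H.exists_mul_norm_le hpos
  refine Metric.isCompact_of_isClosed_isBounded (isClosed_eq H.1 continuous_const)
    ((Metric.isBounded_closedBall (x := 0) (r := 1 / m)).subset fun t ht => ?_)
  rw [mem_closedBall_zero_iff, le_div_iff₀' hm]
  exact (hmh t).trans_eq ht

end Hom1

lemma norm_sum_smul_sub_le {E ι : Type*} [SeminormedAddCommGroup E] [NormedSpace ℝ E]
    [Fintype ι] {w : ι → ℝ} {θ : ι → E} {v : E} {δ : ℝ} (hw₀ : ∀ i, 0 ≤ w i)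
    (hw₁ : ∑ i, w i = 1) (hθ : ∀ i, w i ≠ 0 → dist (θ i) v ≤ δ) :
    ‖∑ i, w i • θ i - v‖ ≤ δ := by
  have hterm : ∀ i, ‖w i • (θ i - v)‖ ≤ w i * δ := fun i => by
    rcases eq_or_ne (w i) 0 with hi | hi
    · simp [hi]
    · rw [norm_smul, Real.norm_of_nonneg (hw₀ i), ← dist_eq_norm]
      exact mul_le_mul_of_nonneg_left (hθ i hi) (hw₀ i)
  calc ‖∑ i, w i • θ i - v‖ = ‖∑ i, w i • (θ i - v)‖ := by
        simp only [smul_sub, Finset.sum_sub_distrib, ← Finset.sum_smul, hw₁, one_smul]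
    _ ≤ ∑ i, w i * δ := (norm_sum_le _ _).trans (Finset.sum_le_sum fun i _ => hterm i)
    _ = δ := by rw [← Finset.sum_mul, hw₁, one_mul]

/-- The positively homogeneous function agreeing with `ρ` on the level set `{h = 1}`; it
vanishes where `h` does. -/
noncomputable def radialExt {n : ℕ} (h ρ : (Fin n → ℝ) → ℝ) (t : Fin n → ℝ) : ℝ :=
  h t * ρ ((h t)⁻¹ • t)

section RadialExt

variable {n : ℕ} {h : (Fin n → ℝ) → ℝ}

lemma Hom1.apply_inv_smul_self (H : Hom1 n h) (hpos : ∀ t, t ≠ 0 → 0 < h t) {t : Fin n → ℝ}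
    (ht : t ≠ 0) : h ((h t)⁻¹ • t) = 1 := by
  rw [H.2 _ (inv_nonneg.2 (hpos t ht).le), inv_mul_cancel₀ (hpos t ht).ne']

lemma radialExt_nonneg (H : Hom1 n h) (hpos : ∀ t, t ≠ 0 → 0 < h t)
    {ρ : (Fin n → ℝ) → ℝ} (hρ : ∀ v, 0 ≤ ρ v) (t : Fin n → ℝ) : 0 ≤ radialExt h ρ t :=
  mul_nonneg (H.nonneg hpos t) (hρ _)

lemma hom1_radialExt (H : Hom1 n h) (hpos : ∀ t, t ≠ 0 → 0 < h t) {ρ : (Fin n → ℝ) → ℝ}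
    (hρ : Continuous ρ) {M : ℝ} (hρM : ∀ v, |ρ v| ≤ M) : Hom1 n (radialExt h ρ) := by
  refine ⟨continuous_iff_continuousAt.2 fun t₀ => ?_, fun c hc t => ?_⟩
  · rcases eq_or_ne t₀ 0 with rfl | ht₀
    · have hbound : ∀ t, ‖radialExt h ρ t‖ ≤ M * h t := fun t => by
        rw [radialExt, norm_mul, Real.norm_of_nonneg (H.nonneg hpos t), mul_comm]
        exact mul_le_mul_of_nonneg_right (hρM _) (H.nonneg hpos t)
      have hlim := (H.1.tendsto 0).const_mul M
      rw [H.map_zero, mul_zero] at hlim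
      simpa [ContinuousAt, radialExt, H.map_zero] using squeeze_zero_norm hbound hlim
    · have hne : h t₀ ≠ 0 := (hpos t₀ ht₀).ne'
      exact H.1.continuousAt.mul
        (hρ.continuousAt.comp ((H.1.continuousAt.inv₀ hne).smul continuousAt_id))
  · simp only [radialExt, H.2 c hc t]
    rcases eq_or_ne (c * h t) 0 with h0 | h0
    · rw [h0, zero_mul, ← mul_assoc, h0, zero_mul]
    · have hscale : (c * h t)⁻¹ * c = (h t)⁻¹ := by
        field_simp [left_ne_zero_of_mul h0, right_ne_zero_of_mul h0]
      rw [smul_smul, hscale, mul_assoc]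

lemma sum_radialExt (H : Hom1 n h) (hpos : ∀ t, t ≠ 0 → 0 < h t) {ι : Type*} [Fintype ι]
    {ρ : ι → (Fin n → ℝ) → ℝ} (hρ₁ : ∀ v, h v = 1 → ∑ i, ρ i v = 1) (t : Fin n → ℝ) :
    ∑ i, radialExt h (ρ i) t = h t := by
  simp only [radialExt, ← Finset.mul_sum]
  rcases eq_or_ne t 0 with rfl | ht
  · rw [H.map_zero, zero_mul]
  · rw [hρ₁ _ (H.apply_inv_smul_self hpos ht), mul_one]

lemma norm_sum_radialExt_smul_sub_le (H : Hom1 n h) (hpos : ∀ t, t ≠ 0 → 0 < h t)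
    {ι : Type*} [Fintype ι] {ρ : ι → (Fin n → ℝ) → ℝ} {θ : ι → Fin n → ℝ} {δ : ℝ}
    (hρ₀ : ∀ i v, 0 ≤ ρ i v) (hρ₁ : ∀ v, h v = 1 → ∑ i, ρ i v = 1)
    (hρθ : ∀ i v, ρ i v ≠ 0 → dist (θ i) v ≤ δ) (t : Fin n → ℝ) :
    ‖∑ i, radialExt h (ρ i) t • θ i - t‖ ≤ δ * h t := by
  rcases eq_or_ne t 0 with rfl | ht
  · simp [radialExt, H.map_zero]
  set u := (h t)⁻¹ • t
  have hu : h u = 1 := H.apply_inv_smul_self hpos ht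
  have htu : t = h t • u := by rw [smul_smul, mul_inv_cancel₀ (hpos t ht).ne', one_smul]
  have hsum : ∑ i, radialExt h (ρ i) t • θ i - t = h t • (∑ i, ρ i u • θ i - u) := by
    rw [smul_sub, ← htu, Finset.smul_sum]
    simp only [radialExt, smul_smul, u]
  calc ‖∑ i, radialExt h (ρ i) t • θ i - t‖ = h t * ‖∑ i, ρ i u • θ i - u‖ := by
        rw [hsum, norm_smul, Real.norm_of_nonneg (hpos t ht).le]
    _ ≤ h t * δ := mul_le_mul_of_nonneg_left
        (norm_sum_smul_sub_le (fun i => hρ₀ i u) (hρ₁ u hu) fun i hi => hρθ i u hi)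
        (hpos t ht).le
    _ = δ * h t := mul_comm _ _

-- A partition of unity subordinate to a finite cover of `{h = 1}` by `δ`-balls, extended radially.
lemma Hom1.exists_partition (H : Hom1 n h) (hpos : ∀ t, t ≠ 0 → 0 < h t) {δ : ℝ} (hδ : 0 < δ) :
    ∃ (ι : Type) (_ : Fintype ι) (θ : ι → Fin n → ℝ) (q : ι → (Fin n → ℝ) → ℝ),
      (∀ i, h (θ i) = 1) ∧ (∀ i, Hom1 n (q i)) ∧ (∀ i t, 0 ≤ q i t) ∧
      (∀ t, ∑ i, q i t = h t) ∧ ∀ t, ‖∑ i, q i t • θ i - t‖ ≤ δ * h t := by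
  obtain ⟨T, hTS, hTfin, hcover⟩ := finite_cover_balls_of_compact (H.isCompact_level_one hpos) hδ
  have : Fintype T := hTfin.fintype
  obtain ⟨ρ, hρsub⟩ := PartitionOfUnity.exists_isSubordinate (isClosed_eq H.1 continuous_const)
    (fun i : T => Metric.ball (i : Fin n → ℝ) δ) (fun _ => Metric.isOpen_ball)
    (by simpa only [Set.biUnion_eq_iUnion] using hcover)
  have hρ₁ : ∀ v, h v = 1 → ∑ i, ρ i v = 1 := fun v hv => by
    rw [← finsum_eq_sum_of_fintype]
    exact ρ.sum_eq_one hv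
  have hρθ : ∀ i v, ρ i v ≠ 0 → dist (i : Fin n → ℝ) v ≤ δ := fun i v hv => by
    rw [dist_comm]
    exact (hρsub i (subset_tsupport _ hv)).le
  refine ⟨T, inferInstance, Subtype.val, fun i => radialExt h (ρ i), fun i => hTS i.2,
    fun i => hom1_radialExt H hpos (ρ i).continuous (M := 1) fun v => ?_,
    fun i => radialExt_nonneg H hpos (ρ.nonneg i), sum_radialExt H hpos hρ₁,
    norm_sum_radialExt_smul_sub_le H hpos ρ.nonneg hρ₁ hρθ⟩
  exact abs_le.2 ⟨(neg_nonpos.2 zero_le_one).trans (ρ.nonneg i v), ρ.le_one i v⟩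

end RadialExt

structure IsLatticeCalculus {E : Type*} [AddCommGroup E] [Lattice E] [Module ℝ E] (n : ℕ)
    (Φ : ((Fin n → ℝ) → ℝ) → E) : Prop where
  map_add : ∀ h₁ h₂, Hom1 n h₁ → Hom1 n h₂ → Φ (h₁ + h₂) = Φ h₁ + Φ h₂
  map_smul : ∀ (c : ℝ) h, Hom1 n h → Φ (c • h) = c • Φ h
  map_sup : ∀ h₁ h₂, Hom1 n h₁ → Hom1 n h₂ → Φ (h₁ ⊔ h₂) = Φ h₁ ⊔ Φ h₂

namespace IsLatticeCalculus

section Lattice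

variable {E : Type*} [AddCommGroup E] [Lattice E] [Module ℝ E] {n : ℕ}
  {Φ : ((Fin n → ℝ) → ℝ) → E} {k k₁ k₂ m : (Fin n → ℝ) → ℝ}

lemma map_zero (hΦ : IsLatticeCalculus n Φ) : Φ 0 = 0 := by
  simpa using hΦ.map_smul 0 0 Hom1.zero

lemma map_sub (hΦ : IsLatticeCalculus n Φ) (H₁ : Hom1 n k₁) (H₂ : Hom1 n k₂) :
    Φ (k₁ - k₂) = Φ k₁ - Φ k₂ := by
  rw [sub_eq_add_neg, ← neg_one_smul ℝ k₂, hΦ.map_add _ _ H₁ (H₂.smul _),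
    hΦ.map_smul _ _ H₂, neg_one_smul, sub_eq_add_neg]

lemma map_sum (hΦ : IsLatticeCalculus n Φ) {ι : Type*} (s : Finset ι)
    {k : ι → (Fin n → ℝ) → ℝ} (hk : ∀ i ∈ s, Hom1 n (k i)) :
    Φ (∑ i ∈ s, k i) = ∑ i ∈ s, Φ (k i) := by
  classical
  induction s using Finset.induction_on with
  | empty => simpa using hΦ.map_zero
  | insert a s ha ih =>
    have hs : ∀ i ∈ s, Hom1 n (k i) := fun i hi => hk i (Finset.mem_insert_of_mem hi)
    rw [Finset.sum_insert ha, Finset.sum_insert ha,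
      hΦ.map_add _ _ (hk a (s.mem_insert_self a)) (Hom1.sum s hs), ih hs]

lemma mono (hΦ : IsLatticeCalculus n Φ) (H₁ : Hom1 n k₁) (H₂ : Hom1 n k₂) (hle : k₁ ≤ k₂) :
    Φ k₁ ≤ Φ k₂ := by
  rw [← sup_eq_right, ← hΦ.map_sup _ _ H₁ H₂, sup_eq_right.2 hle]

lemma nonneg (hΦ : IsLatticeCalculus n Φ) (H : Hom1 n k) (hk : 0 ≤ k) : 0 ≤ Φ k :=
  hΦ.map_zero ▸ hΦ.mono Hom1.zero H hk

lemma abs_le (hΦ : IsLatticeCalculus n Φ) (H : Hom1 n k) (Hm : Hom1 n m)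
    (hkm : ∀ t, |k t| ≤ m t) : |Φ k| ≤ Φ m := by
  refine abs_le'.2 ⟨hΦ.mono H Hm fun t => (le_abs_self _).trans (hkm t), ?_⟩
  rw [← neg_one_smul ℝ (Φ k), ← hΦ.map_smul _ _ H]
  exact hΦ.mono (H.smul _) Hm fun t => by simpa using (neg_le_abs (k t)).trans (hkm t)

end Lattice

variable {E : Type*} [NormedAddCommGroup E] [Lattice E] [HasSolidNorm E] [IsOrderedAddMonoid E]
  [NormedSpace ℝ E] {n : ℕ} {Φ : ((Fin n → ℝ) → ℝ) → E}

lemma norm_le (hΦ : IsLatticeCalculus n Φ) {k m : (Fin n → ℝ) → ℝ} (H : Hom1 n k)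
    (Hm : Hom1 n m) (hkm : ∀ t, |k t| ≤ m t) : ‖Φ k‖ ≤ ‖Φ m‖ := by
  have habs := hΦ.abs_le H Hm hkm
  exact HasSolidNorm.solid (habs.trans_eq (abs_of_nonneg ((abs_nonneg _).trans habs)).symm)

lemma norm_sum_smul_sub_le (hΦ : IsLatticeCalculus n Φ) {x : Fin n → E}
    (hx : ∀ j, Φ (fun t => t j) = x j) {h : (Fin n → ℝ) → ℝ} (H : Hom1 n h) {ι : Type*}
    [Fintype ι] {θ : ι → Fin n → ℝ} {q : ι → (Fin n → ℝ) → ℝ} (hq : ∀ i, Hom1 n (q i))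
    {δ : ℝ} (hδ : 0 ≤ δ) (hacc : ∀ t, ‖∑ i, q i t • θ i - t‖ ≤ δ * h t) (j : Fin n) :
    ‖∑ i, θ i j • Φ (q i) - x j‖ ≤ δ * ‖Φ h‖ := by
  have hk : ∀ i, Hom1 n (θ i j • q i) := fun i => (hq i).smul _
  have hΦk : Φ (∑ i, θ i j • q i) = ∑ i, θ i j • Φ (q i) := by
    rw [hΦ.map_sum _ fun i _ => hk i]
    exact Finset.sum_congr rfl fun i _ => hΦ.map_smul _ _ (hq i)
  have hpt : ∀ t, |(∑ i, θ i j • q i - fun t : Fin n → ℝ => t j) t| ≤ (δ • h) t := fun t => by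
    have := (norm_le_pi_norm (∑ i, q i t • θ i - t) j).trans (hacc t)
    simpa [mul_comm] using this
  rw [← hΦk, ← hx j, ← hΦ.map_sub (Hom1.sum _ fun i _ => hk i) (Hom1.proj j)]
  calc _ ≤ ‖Φ (δ • h)‖ := hΦ.norm_le ((Hom1.sum _ fun i _ => hk i).sub (Hom1.proj j))
        (H.smul δ) hpt
    _ = δ * ‖Φ h‖ := by rw [hΦ.map_smul _ _ H, norm_smul, Real.norm_of_nonneg hδ]

end IsLatticeCalculus

lemma sum_pair_sum_smul_le {X D : Type*} [NormedAddCommGroup X] [NormedSpace ℝ X]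
    [PartialOrder X] [AddCommGroup D] [Module ℝ D] [PartialOrder D] [IsOrderedAddMonoid D]
    (pair : D →ₗ[ℝ] (X →L[ℝ] ℝ)) (hpair : ∀ ψ : D, 0 ≤ ψ → ∀ x : X, 0 ≤ x → 0 ≤ pair ψ x)
    {ι κ : Type*} [Fintype ι] [Fintype κ] {u : ι → X} (hu : ∀ i, 0 ≤ u i) {θ : ι → κ → ℝ}
    {φ : κ → D} {g : D} (hg : ∀ i, ∑ j, θ i j • φ j ≤ g) :
    ∑ j, pair (φ j) (∑ i, θ i j • u i) ≤ pair g (∑ i, u i) := by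
  have hswap : ∑ j, pair (φ j) (∑ i, θ i j • u i) = ∑ i, pair (∑ j, θ i j • φ j) (u i) := by
    simp only [map_sum, map_smul, FunLike.coe_sum, FunLike.coe_smul, Finset.sum_apply,
      Pi.smul_apply]
    exact Finset.sum_comm
  rw [hswap, map_sum]
  refine Finset.sum_le_sum fun i _ => ?_
  have := hpair _ (sub_nonneg.2 (hg i)) (u i) (hu i)
  rwa [map_sub, sub_apply, sub_nonneg] at this

lemma ContinuousLinearMap.apply_le_apply_add_opNorm_mul {X : Type*} [NormedAddCommGroup X]
    [NormedSpace ℝ X] (ℓ : X →L[ℝ] ℝ) (x y : X) : ℓ x ≤ ℓ y + ‖ℓ‖ * ‖x - y‖ := by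
  have h := ℓ.le_opNorm (x - y)
  rw [map_sub, Real.norm_eq_abs] at h
  linarith [le_abs_self (ℓ x - ℓ y)]

theorem sum_pair_le_pair_of_forall_sum_smul_le {X D : Type*} [NormedAddCommGroup X] [Lattice X]
    [HasSolidNorm X] [IsOrderedAddMonoid X] [NormedSpace ℝ X] [AddCommGroup D] [Module ℝ D]
    [PartialOrder D] [IsOrderedAddMonoid D] (pair : D →ₗ[ℝ] (X →L[ℝ] ℝ))
    (hpair : ∀ ψ : D, 0 ≤ ψ → ∀ x : X, 0 ≤ x → 0 ≤ pair ψ x) {n : ℕ}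
    {h : (Fin n → ℝ) → ℝ} (H : Hom1 n h) (hpos : ∀ t, t ≠ 0 → 0 < h t)
    {Φ : ((Fin n → ℝ) → ℝ) → X} (hΦ : IsLatticeCalculus n Φ) {x : Fin n → X}
    (hx : ∀ j, Φ (fun t => t j) = x j) {φ : Fin n → D} {g : D}
    (hg : ∀ a, h a = 1 → ∑ j, a j • φ j ≤ g) :
    ∑ j, pair (φ j) (x j) ≤ pair g (Φ h) := by
  set C := ‖Φ h‖ * ∑ j, ‖pair (φ j)‖
  have hC : 0 ≤ C := by positivity
  refine le_of_forall_pos_le_add fun ε hε => ?_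
  set δ := ε / (C + 1)
  have hδ : 0 < δ := by positivity
  obtain ⟨ι, _, θ, q, hθ, hq, hq₀, hsum, hacc⟩ := H.exists_partition hpos hδ
  have hdecomp : Φ h = ∑ i, Φ (q i) := by
    rw [← hΦ.map_sum _ fun i _ => hq i]
    exact congrArg Φ (funext fun t => by simp [hsum])
  have happrox : ∀ j, pair (φ j) (x j) ≤
      pair (φ j) (∑ i, θ i j • Φ (q i)) + ‖pair (φ j)‖ * (δ * ‖Φ h‖) := fun j => by
    have herr : ‖x j - ∑ i, θ i j • Φ (q i)‖ ≤ δ * ‖Φ h‖ := by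
      rw [norm_sub_rev]
      exact hΦ.norm_sum_smul_sub_le hx H hq hδ.le hacc j
    exact ((pair (φ j)).apply_le_apply_add_opNorm_mul _ _).trans
      (add_le_add_right (mul_le_mul_of_nonneg_left herr (norm_nonneg _)) _)
  have hmain := sum_pair_sum_smul_le pair hpair (fun i => hΦ.nonneg (hq i) (hq₀ i))
    (fun i => hg _ (hθ i))
  have hδC : δ * C ≤ ε := by
    rw [div_mul_eq_mul_div, div_le_iff₀ (by positivity)]
    nlinarith
  calc ∑ j, pair (φ j) (x j)
      ≤ ∑ j, (pair (φ j) (∑ i, θ i j • Φ (q i)) + ‖pair (φ j)‖ * (δ * ‖Φ h‖)) :=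
        Finset.sum_le_sum fun j _ => happrox j
    _ = ∑ j, pair (φ j) (∑ i, θ i j • Φ (q i)) + δ * C := by
        rw [Finset.sum_add_distrib, ← Finset.sum_mul]
        ring
    _ ≤ pair g (Φ h) + ε := by
        rw [hdecomp]
        exact add_le_add hmain hδC

lemma finSeq_add {n : ℕ} (s t : Fin n → ℝ) : finSeq n (s + t) = finSeq n s + finSeq n t := by
  funext k; by_cases hk : k < n <;> simp [finSeq, hk]

lemma finSeq_smul {n : ℕ} (c : ℝ) (t : Fin n → ℝ) : finSeq n (c • t) = c • finSeq n t := by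
  funext k; by_cases hk : k < n <;> simp [finSeq, hk]

lemma finSeq_eq_sum_single {n : ℕ} (t : Fin n → ℝ) :
    finSeq n t = ∑ j : Fin n, Pi.single (j : ℕ) (t j) := by
  funext k
  by_cases hk : k < n
  · rw [Finset.sum_apply, Finset.sum_eq_single ⟨k, hk⟩ ?_ (by simp)]
    · simp [finSeq, hk]
    · intro j _ hj
      rw [Pi.single_apply, if_neg fun h => hj (Fin.ext h.symm)]
  · simp [finSeq, hk, Finset.sum_apply, fun j : Fin n => (j.isLt.trans_le (not_lt.1 hk)).ne']

namespace BanachSeqLattice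

variable (Y : BanachSeqLattice) {n : ℕ}

lemma nrm_zero : Y.nrm 0 = 0 := by
  simpa using Y.nrm_smul 0 0

lemma mem_sum {ι : Type*} (s : Finset ι) {f : ι → ℕ → ℝ} (hf : ∀ i ∈ s, Y.Mem (f i)) :
    Y.Mem (∑ i ∈ s, f i) := by
  classical
  induction s using Finset.induction_on with
  | empty => simpa using Y.zero_mem
  | insert a s ha ih =>
    rw [Finset.sum_insert ha]
    exact Y.add_mem (hf a (s.mem_insert_self a)) (ih fun i hi => hf i (Finset.mem_insert_of_mem hi))

lemma single_eq_smul (m : ℕ) (c : ℝ) :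
    Pi.single m c = c • fun k : ℕ => if k = m then (1 : ℝ) else 0 := by
  funext k; by_cases hk : k = m <;> simp [hk]

lemma mem_single (m : ℕ) (c : ℝ) : Y.Mem (Pi.single m c) := by
  rw [single_eq_smul]
  exact Y.smul_mem c (Y.unit_mem m)

lemma mem_finSeq (t : Fin n → ℝ) : Y.Mem (finSeq n t) := by
  rw [finSeq_eq_sum_single]
  exact Y.mem_sum _ fun j _ => Y.mem_single _ _

lemma nrm_single_pos (m : ℕ) : 0 < Y.nrm (Pi.single m 1) := by
  refine (Y.nrm_nonneg _).lt_of_ne fun h => ?_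
  have := congrFun ((Y.nrm_eq_zero_iff (Y.mem_single m 1)).1 h.symm) m
  simp at this

lemma abs_mul_nrm_single_le {α : ℕ → ℝ} (hα : Y.Mem α) (m : ℕ) :
    |α m| * Y.nrm (Pi.single m 1) ≤ Y.nrm α := by
  rw [← Y.nrm_smul, ← Pi.single_smul, smul_eq_mul, mul_one]
  refine Y.nrm_mono hα fun k => ?_
  by_cases hk : k = m
  · subst hk; simp
  · simp [hk]

open scoped Pointwise in
lemma Knrm_smul {c : ℝ} (hc : 0 ≤ c) (β : ℕ → ℝ) : Knrm Y (c • β) = c * Knrm Y β := by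
  have hset : {s : ℝ | ∃ α : ℕ → ℝ, Y.Mem α ∧ Y.nrm α ≤ 1 ∧ s = ∑' n, |α n * (c • β) n|}
      = c • {s : ℝ | ∃ α : ℕ → ℝ, Y.Mem α ∧ Y.nrm α ≤ 1 ∧ s = ∑' n, |α n * β n|} := by
    ext s
    simp only [Set.mem_smul_set, Set.mem_ofPred_eq, smul_eq_mul]
    constructor
    · rintro ⟨α, hα, hα1, rfl⟩
      refine ⟨_, ⟨α, hα, hα1, rfl⟩, ?_⟩
      simp [← tsum_mul_left, abs_mul, abs_of_nonneg hc, mul_left_comm]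
    · rintro ⟨_, ⟨α, hα, hα1, rfl⟩, rfl⟩
      refine ⟨α, hα, hα1, ?_⟩
      simp [← tsum_mul_left, abs_mul, abs_of_nonneg hc, mul_left_comm]
  rw [Knrm, hset, Real.sSup_smul_of_nonneg hc, smul_eq_mul, Knrm]


-- The norms `‖·‖_{ℝⁿ,Y}` and `‖·‖_{ℝⁿ,Y^×}` of the paper.
noncomputable def finNorm (n : ℕ) (t : Fin n → ℝ) : ℝ := Y.nrm (finSeq n t)

noncomputable def finKotheNorm (n : ℕ) (s : Fin n → ℝ) : ℝ := Knrm Y (finSeq n s)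

lemma hom1_finNorm : Hom1 n (Y.finNorm n) :=
  Hom1.of_add_le (fun s t => by
      simpa only [finNorm, finSeq_add] using Y.nrm_add_le (Y.mem_finSeq s) (Y.mem_finSeq t))
    fun c hc t => by rw [finNorm, finSeq_smul, Y.nrm_smul, abs_of_nonneg hc, finNorm]

lemma finNorm_pos {t : Fin n → ℝ} (ht : t ≠ 0) : 0 < Y.finNorm n t := by
  refine (Y.nrm_nonneg _).lt_of_ne fun h => ht (funext fun j => ?_)
  have := congrFun ((Y.nrm_eq_zero_iff (Y.mem_finSeq t)).1 h.symm) j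
  simpa [finSeq] using this

lemma finNorm_mono {s t : Fin n → ℝ} (hst : ∀ j, |s j| ≤ |t j|) :
    Y.finNorm n s ≤ Y.finNorm n t :=
  Y.nrm_mono (Y.mem_finSeq t) fun k => by
    by_cases hk : k < n
    · simpa [finSeq, hk] using hst ⟨k, hk⟩
    · simp [finSeq, hk]

def finKotheSums (n : ℕ) (s : Fin n → ℝ) : Set ℝ :=
  {r | ∃ α : ℕ → ℝ, Y.Mem α ∧ Y.nrm α ≤ 1 ∧ r = ∑ j : Fin n, |α j * s j|}

lemma finKotheNorm_eq_sSup (s : Fin n → ℝ) : Y.finKotheNorm n s = sSup (Y.finKotheSums n s) := by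
  have htsum : ∀ α : ℕ → ℝ, ∑' k, |α k * finSeq n s k| = ∑ j : Fin n, |α j * s j| := fun α => by
    rw [tsum_eq_sum (s := Finset.range n) fun k hk => by simp [finSeq, Finset.mem_range.not.1 hk],
      ← Fin.sum_univ_eq_sum_range (fun k => |α k * finSeq n s k|)]
    simp [finSeq]
  simp only [finKotheNorm, Knrm, htsum, finKotheSums]

lemma bddAbove_finKotheSums (s : Fin n → ℝ) : BddAbove (Y.finKotheSums n s) := by
  refine ⟨∑ j : Fin n, |s j| / Y.nrm (Pi.single (j : ℕ) 1), ?_⟩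
  rintro r ⟨α, hα, hα1, rfl⟩
  refine Finset.sum_le_sum fun j _ => ?_
  have hcoord : |α j| ≤ 1 / Y.nrm (Pi.single (j : ℕ) 1) := by
    rw [le_div_iff₀ (Y.nrm_single_pos _)]
    exact (Y.abs_mul_nrm_single_le hα _).trans hα1
  calc |α j * s j| ≤ 1 / Y.nrm (Pi.single (j : ℕ) 1) * |s j| := by
        rw [abs_mul]; exact mul_le_mul_of_nonneg_right hcoord (abs_nonneg _)
    _ = |s j| / Y.nrm (Pi.single (j : ℕ) 1) := by ring

lemma sum_abs_mul_le_finKotheNorm {a : Fin n → ℝ} (ha : Y.finNorm n a ≤ 1) (s : Fin n → ℝ) :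
    ∑ j, |a j * s j| ≤ Y.finKotheNorm n s := by
  rw [finKotheNorm_eq_sSup]
  exact le_csSup (Y.bddAbove_finKotheSums s) ⟨finSeq n a, Y.mem_finSeq a, ha, by simp [finSeq]⟩

lemma finKotheNorm_add_le (s s' : Fin n → ℝ) :
    Y.finKotheNorm n (s + s') ≤ Y.finKotheNorm n s + Y.finKotheNorm n s' := by
  simp only [finKotheNorm_eq_sSup]
  refine csSup_le ⟨0, 0, Y.zero_mem, by simp [nrm_zero], by simp⟩ ?_
  rintro r ⟨α, hα, hα1, rfl⟩
  calc ∑ j : Fin n, |α j * (s + s') j|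
        ≤ ∑ j : Fin n, |α j * s j| + ∑ j : Fin n, |α j * s' j| := by
        rw [← Finset.sum_add_distrib]
        exact Finset.sum_le_sum fun j _ => by
          simpa [mul_add] using abs_add_le (α j * s j) (α j * s' j)
    _ ≤ _ := add_le_add (le_csSup (Y.bddAbove_finKotheSums s) ⟨α, hα, hα1, rfl⟩)
        (le_csSup (Y.bddAbove_finKotheSums s') ⟨α, hα, hα1, rfl⟩)

lemma hom1_finKotheNorm : Hom1 n (Y.finKotheNorm n) :=
  Hom1.of_add_le Y.finKotheNorm_add_le fun c hc s => by
    rw [finKotheNorm, finSeq_smul, Y.Knrm_smul hc, finKotheNorm]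

end BanachSeqLattice

lemma IsLatticeCalculus.sum_smul_le_finKotheNorm {E : Type*} [AddCommGroup E] [Lattice E]
    [Module ℝ E] (Y : BanachSeqLattice) {n : ℕ} {Φ : ((Fin n → ℝ) → ℝ) → E}
    (hΦ : IsLatticeCalculus n Φ) {φ : Fin n → E} (hφ : ∀ j, Φ (fun t => t j) = φ j)
    {a : Fin n → ℝ} (ha : Y.finNorm n a ≤ 1) : ∑ j, a j • φ j ≤ Φ (Y.finKotheNorm n) := by
  have hlin : ∀ j, Hom1 n (a j • fun t => t j) := fun j => (Hom1.proj j).smul _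
  calc ∑ j, a j • φ j = Φ (∑ j, a j • fun t => t j) := by
        rw [hΦ.map_sum _ fun j _ => hlin j]
        exact Finset.sum_congr rfl fun j _ => by rw [hΦ.map_smul _ _ (Hom1.proj j), hφ]
    _ ≤ Φ (Y.finKotheNorm n) := hΦ.mono (Hom1.sum _ fun j _ => hlin j) Y.hom1_finKotheNorm
        fun s => by
          simpa using (le_abs_self _).trans ((Finset.abs_sum_le_sum_abs _ _).trans
            (Y.sum_abs_mul_le_finKotheNorm ha s))

theorem stmt18_general (Y : BanachSeqLattice) {X D : Type*}
    [NormedAddCommGroup X] [Lattice X] [HasSolidNorm X] [IsOrderedAddMonoid X] [NormedSpace ℝ X]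
    [NormedAddCommGroup D] [Lattice D] [IsOrderedAddMonoid D] [NormedSpace ℝ D]
    (pair : D →ₗ[ℝ] (X →L[ℝ] ℝ))
    (hpos : ∀ φ : D, 0 ≤ φ ↔ ∀ x : X, 0 ≤ x → 0 ≤ pair φ x)
    (τX : ∀ n : ℕ, (Fin n → X) → ((Fin n → ℝ) → ℝ) → X)
    (hXadd : ∀ (n : ℕ) (x : Fin n → X) (h₁ h₂ : (Fin n → ℝ) → ℝ), Hom1 n h₁ → Hom1 n h₂ →
      τX n x (h₁ + h₂) = τX n x h₁ + τX n x h₂)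
    (hXsmul : ∀ (n : ℕ) (x : Fin n → X) (c : ℝ) (h : (Fin n → ℝ) → ℝ), Hom1 n h →
      τX n x (c • h) = c • τX n x h)
    (hXsup : ∀ (n : ℕ) (x : Fin n → X) (h₁ h₂ : (Fin n → ℝ) → ℝ), Hom1 n h₁ → Hom1 n h₂ →
      τX n x (h₁ ⊔ h₂) = τX n x h₁ ⊔ τX n x h₂)
    (hXproj : ∀ (n : ℕ) (x : Fin n → X) (j : Fin n), τX n x (fun t => t j) = x j)
    (τD : ∀ n : ℕ, (Fin n → D) → ((Fin n → ℝ) → ℝ) → D)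
    (hDadd : ∀ (n : ℕ) (φ : Fin n → D) (h₁ h₂ : (Fin n → ℝ) → ℝ), Hom1 n h₁ → Hom1 n h₂ →
      τD n φ (h₁ + h₂) = τD n φ h₁ + τD n φ h₂)
    (hDsmul : ∀ (n : ℕ) (φ : Fin n → D) (c : ℝ) (h : (Fin n → ℝ) → ℝ), Hom1 n h →
      τD n φ (c • h) = c • τD n φ h)
    (hDsup : ∀ (n : ℕ) (φ : Fin n → D) (h₁ h₂ : (Fin n → ℝ) → ℝ), Hom1 n h₁ → Hom1 n h₂ →
      τD n φ (h₁ ⊔ h₂) = τD n φ h₁ ⊔ τD n φ h₂)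
    (hDproj : ∀ (n : ℕ) (φ : Fin n → D) (j : Fin n), τD n φ (fun t => t j) = φ j)
    (n : ℕ) (x : Fin n → X) (φ : Fin n → D) :
    ∑ j, |pair (φ j) (x j)| ≤
      pair (τD n φ (fun t => Knrm Y (finSeq n t))) (τX n x (fun t => Y.nrm (finSeq n t))) := by
  have hX : IsLatticeCalculus n (τX n x) := ⟨hXadd n x, hXsmul n x, hXsup n x⟩
  have hD : IsLatticeCalculus n (τD n φ) := ⟨hDadd n φ, hDsmul n φ, hDsup n φ⟩
  set σ : Fin n → ℝ := fun j => SignType.sign (pair (φ j) (x j))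
  have hσ : ∀ j, |σ j| ≤ 1 := fun j => by
    rcases lt_trichotomy (pair (φ j) (x j)) 0 with h | h | h <;> simp [σ, h]
  have hdom : ∀ a, Y.finNorm n a = 1 → ∑ j, a j • σ j • φ j ≤ τD n φ (Y.finKotheNorm n) :=
    fun a ha => by
      have hσa : Y.finNorm n (σ * a) ≤ 1 := (Y.finNorm_mono fun j => by
        simpa [abs_mul] using mul_le_of_le_one_left (abs_nonneg (a j)) (hσ j)).trans ha.le
      simpa only [smul_smul, Pi.mul_apply, mul_comm] using
        hD.sum_smul_le_finKotheNorm Y (hDproj n φ) hσa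
  calc ∑ j, |pair (φ j) (x j)| = ∑ j, pair (σ j • φ j) (x j) := by simp [σ]
    _ ≤ _ := sum_pair_le_pair_of_forall_sum_smul_le pair (fun ψ => (hpos ψ).1)
        Y.hom1_finNorm (fun _ => Y.finNorm_pos) hX (hXproj n x) hdom

/-- Lemma (generalizing Lindenstrauss–Tzafriri, Prop. 1.d.2): for a Banach lattice `X`
with dual Banach lattice `X*` (realized as a Banach lattice `D` together with an
isometric order isomorphism `pair : D ≃ X*`), for all `x₁,...,x_n ∈ X` and
`φ₁,...,φ_n ∈ X*`,
`Σ_j |φ_j(x_j)| ≤ ⟨ ‖(x₁,...,x_n)‖_Y , ‖(φ₁,...,φ_n)‖_{Y^×} ⟩`,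
the two lattice elements being given by Krivine's functional calculus in `X` and in
`X*` respectively. -/
theorem stmt18 (Y : BanachSeqLattice) {X D : Type*}
    [NormedAddCommGroup X] [Lattice X] [HasSolidNorm X] [IsOrderedAddMonoid X] [NormedSpace ℝ X] [CompleteSpace X]
    [NormedAddCommGroup D] [Lattice D] [HasSolidNorm D] [IsOrderedAddMonoid D] [NormedSpace ℝ D] [CompleteSpace D]
    (pair : D →ₗ[ℝ] (X →L[ℝ] ℝ)) (hbij : Function.Bijective pair)
    (hiso : ∀ φ : D, ‖pair φ‖ = ‖φ‖)
    (hpos : ∀ φ : D, 0 ≤ φ ↔ ∀ x : X, 0 ≤ x → 0 ≤ pair φ x)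
    (τX : ∀ n : ℕ, (Fin n → X) → ((Fin n → ℝ) → ℝ) → X)
    (hXadd : ∀ (n : ℕ) (x : Fin n → X) (h₁ h₂ : (Fin n → ℝ) → ℝ), Hom1 n h₁ → Hom1 n h₂ →
      τX n x (h₁ + h₂) = τX n x h₁ + τX n x h₂)
    (hXsmul : ∀ (n : ℕ) (x : Fin n → X) (c : ℝ) (h : (Fin n → ℝ) → ℝ), Hom1 n h →
      τX n x (c • h) = c • τX n x h)
    (hXsup : ∀ (n : ℕ) (x : Fin n → X) (h₁ h₂ : (Fin n → ℝ) → ℝ), Hom1 n h₁ → Hom1 n h₂ →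
      τX n x (h₁ ⊔ h₂) = τX n x h₁ ⊔ τX n x h₂)
    (hXproj : ∀ (n : ℕ) (x : Fin n → X) (j : Fin n), τX n x (fun t => t j) = x j)
    (τD : ∀ n : ℕ, (Fin n → D) → ((Fin n → ℝ) → ℝ) → D)
    (hDadd : ∀ (n : ℕ) (φ : Fin n → D) (h₁ h₂ : (Fin n → ℝ) → ℝ), Hom1 n h₁ → Hom1 n h₂ →
      τD n φ (h₁ + h₂) = τD n φ h₁ + τD n φ h₂)
    (hDsmul : ∀ (n : ℕ) (φ : Fin n → D) (c : ℝ) (h : (Fin n → ℝ) → ℝ), Hom1 n h →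
      τD n φ (c • h) = c • τD n φ h)
    (hDsup : ∀ (n : ℕ) (φ : Fin n → D) (h₁ h₂ : (Fin n → ℝ) → ℝ), Hom1 n h₁ → Hom1 n h₂ →
      τD n φ (h₁ ⊔ h₂) = τD n φ h₁ ⊔ τD n φ h₂)
    (hDproj : ∀ (n : ℕ) (φ : Fin n → D) (j : Fin n), τD n φ (fun t => t j) = φ j)
    (n : ℕ) (x : Fin n → X) (φ : Fin n → D) :
    ∑ j, |pair (φ j) (x j)| ≤
      pair (τD n φ (fun t => Knrm Y (finSeq n t))) (τX n x (fun t => Y.nrm (finSeq n t))) :=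
  stmt18_general Y pair hpos τX hXadd hXsmul hXsup hXproj τD hDadd hDsmul hDsup hDproj n x φ
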